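/- Hölder inequality for variable exponent sequence spaces: let p : ℕ → [1,∞] and define the pointwise conjugate p* : ℕ → [1,∞] by 1/p(n) + 1/p*(n) = 1 for each n. Then for any real sequences (x_n) and (y_n), ∑_{n=1}^∞ |x_n y_n| ≤ Φ_p((x_n)) · Φ_{p*}((y_n)). -/

import Mathlib

open scoped ENNReal

/-- `t ⊞_p s`: for `p < ∞`, `(t^p + s^p)^(1/p)`; for `p = ∞`, `max t s`. -/
noncomputable def boxPlus (p : ℝ≥0∞) (t s : ℝ) : ℝ :=
  if p = ∞ then max t s else (t ^ p.toReal + s ^ p.toReal) ^ (1 / p.toReal)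

/-- The recursively defined seminorms `|||x|||_(k)` (0-indexed). -/
noncomputable def seqNorm (p : ℕ → ℝ≥0∞) (x : ℕ → ℝ) : ℕ → ℝ
  | 0 => boxPlus (p 0) |x 0| |x 1|
  | k + 1 => boxPlus (p (k + 1)) (seqNorm p x k) |x (k + 2)|

/-- `Φ_p(x) = lim_k |||x|||_(k)`, as the supremum of the nondecreasing sequence. -/
noncomputable def Phi (p : ℕ → ℝ≥0∞) (x : ℕ → ℝ) : ℝ≥0∞ :=
  ⨆ k, ENNReal.ofReal (seqNorm p x k)

/-- `x` is a bounded real sequence, i.e. `x ∈ ℓ^∞`. -/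
def IsBddSeq (x : ℕ → ℝ) : Prop := ∃ M : ℝ, ∀ n, |x n| ≤ M

/-- Membership in the variable exponent space `ℓ^{p(·)}`. -/
def MemVLp (p : ℕ → ℝ≥0∞) (x : ℕ → ℝ) : Prop := IsBddSeq x ∧ Phi p x < ⊤

/-!
Each step `|||x|||_(k+1) = |||x|||_(k) ⊞_{p(k+1)} |x_{k+2}|` of the recursion is a two-term
`ℓ^p`-norm, so the two-term Hölder inequality `ab + cd ≤ (a ⊞_p c)(b ⊞_{p*} d)`, applied once per
step, gives by induction `∑_{n ≤ k+1} |x_n y_n| ≤ |||x|||_(k) · |||y|||*_(k)`; letting `k → ∞`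
yields the inequality for the series.
-/

lemma boxPlus_top (t s : ℝ) : boxPlus ∞ t s = max t s := if_pos rfl

lemma boxPlus_one (t s : ℝ) : boxPlus 1 t s = t + s := by
  simp [boxPlus]

lemma boxPlus_nonneg {p : ℝ≥0∞} {t s : ℝ} (ht : 0 ≤ t) (hs : 0 ≤ s) : 0 ≤ boxPlus p t s := by
  unfold boxPlus
  split
  · exact le_max_of_le_left ht
  · positivity

lemma mul_add_mul_le_max_mul_add {a b c d : ℝ} (hb : 0 ≤ b) (hd : 0 ≤ d) :
    a * b + c * d ≤ max a c * (b + d) :=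
  calc a * b + c * d ≤ max a c * b + max a c * d := by
        gcongr
        exacts [le_max_left a c, le_max_right a c]
    _ = max a c * (b + d) := by ring

lemma mul_add_mul_le_boxPlus_mul_boxPlus {P Q : ℝ≥0∞} (hPQ : P.HolderConjugate Q)
    {a b c d : ℝ} (ha : 0 ≤ a) (hb : 0 ≤ b) (hc : 0 ≤ c) (hd : 0 ≤ d) :
    a * b + c * d ≤ boxPlus P a c * boxPlus Q b d := by
  by_cases hP : P = ∞
  · obtain rfl : Q = 1 := (ENNReal.HolderConjugate.eq_top_iff_eq_one P Q).1 hP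
    rw [hP, boxPlus_top, boxPlus_one]
    exact mul_add_mul_le_max_mul_add hb hd
  by_cases hQ : Q = ∞
  · obtain rfl : P = 1 := (ENNReal.HolderConjugate.eq_top_iff_eq_one Q P).1 hQ
    rw [hQ, boxPlus_top, boxPlus_one]
    linarith [mul_add_mul_le_max_mul_add (a := b) (c := d) ha hc]
  have := Real.inner_le_Lp_mul_Lq_of_nonneg Finset.univ (f := ![a, c]) (g := ![b, d])
    (ENNReal.HolderConjugate.toReal_of_ne_top hP hQ)
    (by simp [Fin.forall_fin_two, ha, hc]) (by simp [Fin.forall_fin_two, hb, hd])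
  simpa [Fin.sum_univ_two, boxPlus, hP, hQ] using this

lemma seqNorm_nonneg (p : ℕ → ℝ≥0∞) (x : ℕ → ℝ) : ∀ k, 0 ≤ seqNorm p x k
  | 0 => boxPlus_nonneg (abs_nonneg _) (abs_nonneg _)
  | k + 1 => boxPlus_nonneg (seqNorm_nonneg p x k) (abs_nonneg _)

lemma ofReal_seqNorm_le_Phi (p : ℕ → ℝ≥0∞) (x : ℕ → ℝ) (k : ℕ) :
    ENNReal.ofReal (seqNorm p x k) ≤ Phi p x :=
  le_iSup (fun k => ENNReal.ofReal (seqNorm p x k)) k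

lemma sum_range_abs_mul_le_seqNorm_mul_seqNorm {p q : ℕ → ℝ≥0∞}
    (hpq : ∀ n, (p n).HolderConjugate (q n)) (x y : ℕ → ℝ) (k : ℕ) :
    ∑ n ∈ Finset.range (k + 2), |x n * y n| ≤ seqNorm p x k * seqNorm q y k := by
  induction k with
  | zero =>
    simp only [Finset.sum_range_succ, Finset.range_zero, Finset.sum_empty, zero_add, abs_mul,
      seqNorm]
    exact mul_add_mul_le_boxPlus_mul_boxPlus (hpq 0) (abs_nonneg _) (abs_nonneg _)
      (abs_nonneg _) (abs_nonneg _)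
  | succ k ih =>
    calc ∑ n ∈ Finset.range (k + 3), |x n * y n|
        = ∑ n ∈ Finset.range (k + 2), |x n * y n| + |x (k + 2)| * |y (k + 2)| := by
          rw [Finset.sum_range_succ, abs_mul]
      _ ≤ seqNorm p x k * seqNorm q y k + |x (k + 2)| * |y (k + 2)| := by gcongr
      _ ≤ seqNorm p x (k + 1) * seqNorm q y (k + 1) :=
          mul_add_mul_le_boxPlus_mul_boxPlus (hpq (k + 1)) (seqNorm_nonneg p x k)
            (seqNorm_nonneg q y k) (abs_nonneg _) (abs_nonneg _)

theorem holder_inequality_general (p pStar : ℕ → ℝ≥0∞)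
    (hconj : ∀ n, 1 / p n + 1 / pStar n = 1) (x y : ℕ → ℝ) :
    ∑' n, ENNReal.ofReal |x n * y n| ≤ Phi p x * Phi pStar y := by
  have hpq (n : ℕ) : (p n).HolderConjugate (pStar n) :=
    ENNReal.holderConjugate_iff.2 (by simpa using hconj n)
  refine ENNReal.tsum_le_of_sum_range_le fun k => ?_
  calc ∑ n ∈ Finset.range k, ENNReal.ofReal |x n * y n|
      ≤ ∑ n ∈ Finset.range (k + 2), ENNReal.ofReal |x n * y n| :=
        Finset.sum_le_sum_of_subset (Finset.range_subset_range.2 (by omega))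
    _ = ENNReal.ofReal (∑ n ∈ Finset.range (k + 2), |x n * y n|) :=
        (ENNReal.ofReal_sum_of_nonneg fun n _ => abs_nonneg _).symm
    _ ≤ ENNReal.ofReal (seqNorm p x k) * ENNReal.ofReal (seqNorm pStar y k) := by
        rw [← ENNReal.ofReal_mul (seqNorm_nonneg p x k)]
        exact ENNReal.ofReal_le_ofReal (sum_range_abs_mul_le_seqNorm_mul_seqNorm hpq x y k)
    _ ≤ Phi p x * Phi pStar y := by
        gcongr <;> exact ofReal_seqNorm_le_Phi _ _ k

theorem holder_inequality (p pStar : ℕ → ℝ≥0∞) (hp : ∀ n, 1 ≤ p n)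
    (hconj : ∀ n, 1 / p n + 1 / pStar n = 1) (x y : ℕ → ℝ) :
    ∑' n, ENNReal.ofReal |x n * y n| ≤ Phi p x * Phi pStar y :=
  holder_inequality_general p pStar hconj x y
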